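/- arXiv:1503.06857 — 6 statements merged into one kernel-verified Lean document; each statement's English description precedes it below -/
import Mathlib

section
/- Suppose the max-flow f_k^max of the DAG D_k satisfies f_k^max < λ ≤ f^max, where f^max is the max-flow of the underlying undirected graph G. Then in D_k, under the lexicographically minimal overload vector q_k^min, there exists a directed link (i, j) ∈ E_k with q_{k,i}^min = 0 and q_{k,j}^min > 0. -/
open Finset

/-- Suppose the max-flow `fk` of the DAG `D_k` satisfies `fk < lam ≤ fmax`, where `fmax`
is the max-flow of the underlying undirected graph `G`.  Here `q` is the
lexicographically minimal overload vector of `D_k`; the set `A_k = {n | q n > 0}` of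
overloaded nodes together with its complement forms a min-cut of `D_k` of capacity `fk`
(with `s ∈ A_k`, `d ∉ A_k`), and by max-flow min-cut on `G`, `fmax` is at most the
undirected capacity of any cut.  Then there exists a directed link `(i, j) ∈ E_k` with
`q i = 0` and `q j > 0`. -/
theorem exists_link_into_overloaded
    {V : Type*} [Fintype V] [DecidableEq V]
    (Ek : Finset (V × V)) (s d : V) (c : V → V → ℝ) (q : V → ℝ)
    (lam fk fmax : ℝ)
    (hq0 : ∀ n, 0 ≤ q n)
    (hqs : 0 < q s) (hqd : q d = 0)
    (hcap : ∑ p ∈ Ek.filter (fun p => 0 < q p.1 ∧ ¬ 0 < q p.2), c p.1 p.2 = fk)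
    (hG : ∀ X : Finset V, s ∈ X → d ∉ X →
      fmax ≤ ∑ p ∈ Ek.filter (fun p => p.1 ∈ X ∧ p.2 ∉ X), c p.1 p.2
           + ∑ p ∈ Ek.filter (fun p => p.1 ∉ X ∧ p.2 ∈ X), c p.1 p.2)
    (h1 : fk < lam) (h2 : lam ≤ fmax) :
    ∃ p ∈ Ek, q p.1 = 0 ∧ 0 < q p.2 := by
  by_contra h
  push_neg at h
  set X : Finset V := Finset.univ.filter (fun n => 0 < q n) with hX
  have hmem : ∀ n, n ∈ X ↔ 0 < q n := by
    intro n; simp [hX]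
  have hs : s ∈ X := (hmem s).mpr hqs
  have hd : d ∉ X := by
    rw [hmem]; simp [hqd]
  have hout : ∑ p ∈ Ek.filter (fun p => p.1 ∈ X ∧ p.2 ∉ X), c p.1 p.2 = fk := by
    rw [← hcap]
    apply Finset.sum_congr
    · apply Finset.filter_congr
      intro p _
      simp only [hmem]
    · intros; rfl
  have hin : ∑ p ∈ Ek.filter (fun p => p.1 ∉ X ∧ p.2 ∈ X), c p.1 p.2 = 0 := by
    apply Finset.sum_eq_zero
    intro p hp
    simp only [Finset.mem_filter, hmem] at hp
    obtain ⟨hpE, hp1, hp2⟩ := hp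
    have hq1 : q p.1 = 0 := le_antisymm (not_lt.mp hp1) (hq0 p.1)
    exact absurd hp2 (not_lt.mpr (h p hpE hq1))
  have := hG X hs hd
  rw [hout, hin] at this
  linarith
end

section
/- If the traffic demand satisfies λ ≤ f^max, then iterating the link-reversal algorithm (each iteration producing a new DAG with strictly lexicographically smaller minimal overload vector) terminates in a finite number of iterations with a DAG whose max-flow is at least λ. -/
open Finset

/-- The components of `u` sorted in decreasing order. -/
noncomputable def sortedDesc {ι : Type*} [Fintype ι] (u : ι → ℝ) : List ℝ :=
  ((Multiset.map u Finset.univ.val).sort (· ≤ ·)).reverse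

/-- Strict lexicographic comparison of decreasing rearrangements. -/
noncomputable def lexLt {ι : Type*} [Fintype ι] (u v : ι → ℝ) : Prop :=
  List.Lex (· < ·) (sortedDesc u) (sortedDesc v)

lemma lexListTrans : ∀ {l1 l2 l3 : List ℝ}, List.Lex (· < ·) l1 l2 →
    List.Lex (· < ·) l2 l3 → List.Lex (· < ·) l1 l3 := by
  intro l1 l2 l3 h1
  induction h1 generalizing l3 with
  | nil => intro h2; cases h2 <;> exact List.Lex.nil
  | @cons a l1 l2 h ih =>
      intro h2
      cases h2 with
      | cons h' => exact List.Lex.cons (ih h')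
      | rel h' => exact List.Lex.rel h'
  | @rel a l1 b l2 hab =>
      intro h2
      cases h2 with
      | cons h' => exact List.Lex.rel hab
      | rel h' => exact List.Lex.rel (hab.trans h')

lemma lexLt_trans {ι : Type*} [Fintype ι] {u v w : ι → ℝ}
    (h1 : lexLt u v) (h2 : lexLt v w) : lexLt u w := lexListTrans h1 h2

lemma lexLt_irrefl {ι : Type*} [Fintype ι] (u : ι → ℝ) : ¬ lexLt u u :=
  fun h => (List.Lex.asymm (· < ·)).asymm _ _ h h

/-- Suppose the traffic demand satisfies `lam ≤ fmax`.  There are finitely many DAG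
orientations of the finite network; `minOv D` is the (unique) lexicographically minimal
overload vector of the DAG `D`, the link-reversal step maps any DAG with nonzero minimal
overload vector to one with strictly lexicographically smaller minimal overload vector,
`minOv D = 0` iff `lam ≤ maxflow D`, and a DAG orientation with max-flow `fmax ≥ lam`
exists.  Then iterating the link-reversal algorithm from any initial DAG terminates in a
finite number of iterations with a DAG whose max-flow is at least `lam`. -/
theorem link_reversal_terminates
    {V : Type*} [Fintype V] {Dag : Type*} [Fintype Dag]
    (step : Dag → Dag) (minOv : Dag → V → ℝ) (maxflow : Dag → ℝ)
    (lam fmax : ℝ) (hlam : lam ≤ fmax)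
    (hdec : ∀ D : Dag, minOv D ≠ 0 → lexLt (minOv (step D)) (minOv D))
    (hzero : ∀ D : Dag, minOv D = 0 ↔ lam ≤ maxflow D)
    (hex : ∃ D : Dag, fmax ≤ maxflow D)
    (D0 : Dag) :
    ∃ k : ℕ, lam ≤ maxflow (step^[k] D0) := by
  by_contra h
  push_neg at h
  have hne : ∀ k, minOv (step^[k] D0) ≠ 0 := by
    intro k h0
    exact absurd ((hzero _).1 h0) (not_le.2 (h k))
  have hstep : ∀ k, lexLt (minOv (step^[k+1] D0)) (minOv (step^[k] D0)) := by
    intro k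
    rw [Function.iterate_succ_apply']
    exact hdec _ (hne k)
  have hmono : ∀ i j, i < j → lexLt (minOv (step^[j] D0)) (minOv (step^[i] D0)) := by
    intro i j hij
    induction j with
    | zero => omega
    | succ n ih =>
      rcases Nat.lt_succ_iff_lt_or_eq.1 hij with h' | h'
      · exact lexLt_trans (hstep n) (ih h')
      · subst h'; exact hstep i
  obtain ⟨i, j, hne', hij⟩ := Finite.exists_ne_map_eq_of_infinite (fun k => step^[k] D0)
  rcases Nat.lt_or_ge i j with h' | h'
  · have := hmono i j h'
    rw [hij] at this
    exact lexLt_irrefl _ this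
  · have := hmono j i (lt_of_le_of_ne h' (Ne.symm hne'))
    rw [hij] at this
    exact lexLt_irrefl _ this
end

section
/- Suppose λ > f_k^max and, under the lexicographically minimal overload vector of D_k, there is no link (i, j) ∈ E_k with q_{k,i}^min = 0 and q_{k,j}^min > 0. Then f_k^max = f^max, i.e., the DAG D_k already achieves the max-flow of the underlying undirected graph, and hence λ > f^max. -/
open Finset

/-- Suppose `lam > fk` and, under the lexicographically minimal overload vector `q` of
the DAG `D_k`, there is no link `(i, j) ∈ E_k` with `q i = 0` and `q j > 0`.  Here the
nonempty set `A_k = {n | q n > 0}` of overloaded nodes (with `s ∈ A_k`, `d ∉ A_k`)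
forms a min-cut of `D_k` of capacity `fk`, `fk ≤ fmax`, and by max-flow min-cut on the
undirected graph `G`, `fmax` is at most the undirected capacity of any cut.  Then
`fk = fmax`, i.e. `D_k` already achieves the max-flow of `G`, and hence `lam > fmax`. -/
theorem no_reversal_implies_optimal
    {V : Type*} [Fintype V] [DecidableEq V]
    (Ek : Finset (V × V)) (s d : V) (c : V → V → ℝ) (q : V → ℝ)
    (lam fk fmax : ℝ)
    (hq0 : ∀ n, 0 ≤ q n)
    (hqs : 0 < q s) (hqd : q d = 0)
    (hcap : ∑ p ∈ Ek.filter (fun p => 0 < q p.1 ∧ ¬ 0 < q p.2), c p.1 p.2 = fk)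
    (hG : ∀ X : Finset V, s ∈ X → d ∉ X →
      fmax ≤ ∑ p ∈ Ek.filter (fun p => p.1 ∈ X ∧ p.2 ∉ X), c p.1 p.2
           + ∑ p ∈ Ek.filter (fun p => p.1 ∉ X ∧ p.2 ∈ X), c p.1 p.2)
    (hfk : fk ≤ fmax)
    (hlam : fk < lam)
    (hnolink : ¬ ∃ p ∈ Ek, q p.1 = 0 ∧ 0 < q p.2) :
    fk = fmax ∧ fmax < lam := by
  classical
  set X : Finset V := Finset.univ.filter (fun n => 0 < q n) with hX
  have hsX : s ∈ X := by simp [hX, hqs]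
  have hdX : d ∉ X := by simp [hX, hqd]
  have hle := hG X hsX hdX
  have h1 : Ek.filter (fun p => p.1 ∈ X ∧ p.2 ∉ X)
      = Ek.filter (fun p => 0 < q p.1 ∧ ¬ 0 < q p.2) := by
    apply Finset.filter_congr
    intro p hp
    simp [hX]
  have h2 : Ek.filter (fun p => p.1 ∉ X ∧ p.2 ∈ X) = ∅ := by
    rw [Finset.filter_eq_empty_iff]
    intro p hp hcon
    simp only [hX, Finset.mem_filter, Finset.mem_univ, true_and] at hcon
    exact hnolink ⟨p, hp, le_antisymm (not_lt.mp hcon.1) (hq0 p.1), hcon.2⟩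
  rw [h1, h2, hcap, Finset.sum_empty, add_zero] at hle
  exact ⟨le_antisymm hfk hle, lt_of_le_of_lt hle hlam⟩
end

section
/- Let A_k be the set of overloaded nodes under a flow allocation (f_{ij}) inducing the lexicographically minimal overload vector of a DAG D_k with arrival rate λ and |A_k| > 0. Then s ∈ A_k, d ∈ A_k^c, and (A_k, A_k^c) is a min-cut of D_k, i.e., cap_k(A_k, A_k^c) = f_k^max. -/
open Finset

/-- Min-cut lemma.  Let `A_k = {n | q n > 0}` be the set of overloaded nodes under a
flow allocation `f` inducing the lexicographically minimal overload vector `q` of a DAG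
`D_k` with arrival rate `lam`; the allocation satisfies `f_{ij} = 0` when `q i < q j`,
`f_{ij} = c_{ij}` when `q i > q j`, and the throughput received at `d` equals the
max-flow `fk` of `D_k` (which is at most the capacity of every cut).  If `A_k` is
nonempty, then `s ∈ A_k`, `d ∈ A_k^c`, and `(A_k, A_k^c)` is a min-cut of `D_k`, i.e.
`cap_k(A_k, A_k^c) = fk`. -/
theorem overloaded_set_is_min_cut
    {V : Type*} [Fintype V] [DecidableEq V]
    (Ek : Finset (V × V)) (s d : V) (hsd : s ≠ d)
    (c f : V → V → ℝ) (q : V → ℝ) (lam fk : ℝ)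
    (hd_out : ∀ j, (d, j) ∉ Ek)
    (hbounds : ∀ p ∈ Ek, 0 ≤ f p.1 p.2 ∧ f p.1 p.2 ≤ c p.1 p.2)
    (hq0 : ∀ n, 0 ≤ q n) (hqd : q d = 0)
    (hcons : ∀ n, n ≠ d →
      q n = (if n = s then lam else 0)
        + ∑ p ∈ Ek.filter (fun p => p.2 = n), f p.1 p.2
        - ∑ p ∈ Ek.filter (fun p => p.1 = n), f p.1 p.2)
    (hzero : ∀ p ∈ Ek, q p.1 < q p.2 → f p.1 p.2 = 0)
    (hfull : ∀ p ∈ Ek, q p.2 < q p.1 → f p.1 p.2 = c p.1 p.2)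
    (hthr : ∑ p ∈ Ek.filter (fun p => p.2 = d), f p.1 p.2 = fk)
    (hmin : ∀ X : Finset V, s ∈ X → d ∉ X →
      fk ≤ ∑ p ∈ Ek.filter (fun p => p.1 ∈ X ∧ p.2 ∉ X), c p.1 p.2)
    (hA : ∃ n, 0 < q n) :
    0 < q s ∧ q d = 0 ∧
      ∑ p ∈ Ek.filter (fun p => 0 < q p.1 ∧ ¬ 0 < q p.2), c p.1 p.2 = fk := by
  classical
  -- General cut identity obtained by summing the conservation equations over `X`.
  have key : ∀ X : Finset V, d ∉ X →
      ∑ n ∈ X, q n = (if s ∈ X then lam else 0)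
        + ∑ p ∈ Ek.filter (fun p => p.2 ∈ X), f p.1 p.2
        - ∑ p ∈ Ek.filter (fun p => p.1 ∈ X), f p.1 p.2 := by
    intro X hdX
    have h1 : ∑ n ∈ X, ∑ p ∈ Ek.filter (fun p => p.2 = n), f p.1 p.2
        = ∑ p ∈ Ek.filter (fun p => p.2 ∈ X), f p.1 p.2 := by
      rw [← Finset.sum_fiberwise_of_maps_to (g := fun p : V × V => p.2)
          (t := X) (fun p hp => (Finset.mem_filter.mp hp).2) (fun p => f p.1 p.2)]
      refine Finset.sum_congr rfl fun n hn => ?_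
      refine Finset.sum_congr ?_ fun _ _ => rfl
      ext p
      simp only [Finset.mem_filter, and_assoc]
      constructor
      · rintro ⟨hpE, h3⟩; exact ⟨hpE, h3 ▸ hn, h3⟩
      · rintro ⟨hpE, _, h3⟩; exact ⟨hpE, h3⟩
    have h2 : ∑ n ∈ X, ∑ p ∈ Ek.filter (fun p => p.1 = n), f p.1 p.2
        = ∑ p ∈ Ek.filter (fun p => p.1 ∈ X), f p.1 p.2 := by
      rw [← Finset.sum_fiberwise_of_maps_to (g := fun p : V × V => p.1)
          (t := X) (fun p hp => (Finset.mem_filter.mp hp).2) (fun p => f p.1 p.2)]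
      refine Finset.sum_congr rfl fun n hn => ?_
      refine Finset.sum_congr ?_ fun _ _ => rfl
      ext p
      simp only [Finset.mem_filter, and_assoc]
      constructor
      · rintro ⟨hpE, h3⟩; exact ⟨hpE, h3 ▸ hn, h3⟩
      · rintro ⟨hpE, _, h3⟩; exact ⟨hpE, h3⟩
    calc ∑ n ∈ X, q n
        = ∑ n ∈ X, ((if n = s then lam else 0)
            + ∑ p ∈ Ek.filter (fun p => p.2 = n), f p.1 p.2
            - ∑ p ∈ Ek.filter (fun p => p.1 = n), f p.1 p.2) :=
          Finset.sum_congr rfl fun n hn => hcons n (fun h => hdX (h ▸ hn))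
      _ = _ := by
          rw [Finset.sum_sub_distrib, Finset.sum_add_distrib, h1, h2,
            Finset.sum_ite_eq' X s (fun _ => lam)]
  obtain ⟨n0, hn0⟩ := hA
  set A : Finset V := Finset.univ.filter (fun n => 0 < q n) with hAdef
  have hmemA : ∀ n, n ∈ A ↔ 0 < q n := by intro n; simp [hAdef]
  have hdA : d ∉ A := by simp [hmemA, hqd]
  have hSA : ∑ n ∈ A, q n = ∑ n, q n := by
    refine Finset.sum_subset (Finset.subset_univ _) fun x _ hx => ?_
    exact le_antisymm (not_lt.mp (by simpa [hmemA] using hx)) (hq0 x)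
  have hpos : 0 < ∑ n ∈ A, q n :=
    Finset.sum_pos' (fun n _ => hq0 n) ⟨n0, (hmemA n0).mpr hn0, hn0⟩
  -- Edges into A from outside carry zero flow.
  have hin : ∑ p ∈ Ek.filter (fun p => p.2 ∈ A), f p.1 p.2
      = ∑ p ∈ Ek.filter (fun p => p.1 ∈ A ∧ p.2 ∈ A), f p.1 p.2 := by
    rw [← Finset.sum_filter_add_sum_filter_not (Ek.filter (fun p => p.2 ∈ A))
      (fun p => p.1 ∈ A) (fun p => f p.1 p.2)]
    have hz : ∑ p ∈ (Ek.filter (fun p => p.2 ∈ A)).filter (fun p => ¬ p.1 ∈ A),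
        f p.1 p.2 = 0 := by
      refine Finset.sum_eq_zero fun p hp => ?_
      simp only [Finset.mem_filter] at hp
      obtain ⟨⟨hpE, h2⟩, h1⟩ := hp
      have hq1 : q p.1 = 0 :=
        le_antisymm (not_lt.mp (by simpa [hmemA] using h1)) (hq0 _)
      exact hzero p hpE (by rw [hq1]; exact (hmemA _).mp h2)
    rw [hz, add_zero]
    refine Finset.sum_congr ?_ fun _ _ => rfl
    ext p
    simp only [Finset.mem_filter]
    tauto
  -- Edges out of A are saturated, giving the cut capacity.
  have hout : ∑ p ∈ Ek.filter (fun p => p.1 ∈ A), f p.1 p.2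
      = ∑ p ∈ Ek.filter (fun p => p.1 ∈ A ∧ p.2 ∈ A), f p.1 p.2
        + ∑ p ∈ Ek.filter (fun p => 0 < q p.1 ∧ ¬ 0 < q p.2), c p.1 p.2 := by
    rw [← Finset.sum_filter_add_sum_filter_not (Ek.filter (fun p => p.1 ∈ A))
      (fun p => p.2 ∈ A) (fun p => f p.1 p.2)]
    congr 1
    · refine Finset.sum_congr ?_ fun _ _ => rfl
      ext p
      simp only [Finset.mem_filter]
      tauto
    · have hset : (Ek.filter (fun p => p.1 ∈ A)).filter (fun p => ¬ p.2 ∈ A)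
          = Ek.filter (fun p => 0 < q p.1 ∧ ¬ 0 < q p.2) := by
        ext p
        simp only [Finset.mem_filter, hmemA]
        tauto
      rw [hset]
      refine Finset.sum_congr rfl fun p hp => ?_
      simp only [Finset.mem_filter] at hp
      obtain ⟨hpE, h1, h2⟩ := hp
      have hq2 : q p.2 = 0 := le_antisymm (not_lt.mp h2) (hq0 _)
      exact hfull p hpE (by rw [hq2]; exact h1)
  set cap : ℝ := ∑ p ∈ Ek.filter (fun p => 0 < q p.1 ∧ ¬ 0 < q p.2), c p.1 p.2 with hcap
  have hAeq : ∑ n ∈ A, q n = (if s ∈ A then lam else 0) - cap := by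
    rw [key A hdA, hin, hout]; ring
  -- cap is nonnegative
  have hcap0 : 0 ≤ cap := by
    refine Finset.sum_nonneg fun p hp => ?_
    simp only [Finset.mem_filter] at hp
    obtain ⟨hpE, h1, h2⟩ := hp
    have hq2 : q p.2 = 0 := le_antisymm (not_lt.mp h2) (hq0 _)
    have := hfull p hpE (by rw [hq2]; exact h1)
    rw [← this]; exact (hbounds p hpE).1
  -- s must be overloaded
  have hsA : s ∈ A := by
    by_contra hs
    rw [hAeq, if_neg hs] at hpos
    linarith
  -- Global conservation: total overload = lam - fk
  have hglob : ∑ n, q n = lam - fk := by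
    have hX2 := key (Finset.univ.erase d) (Finset.notMem_erase d _)
    have hsX2 : s ∈ Finset.univ.erase d := Finset.mem_erase.mpr ⟨hsd, Finset.mem_univ s⟩
    rw [if_pos hsX2, Finset.sum_erase _ hqd] at hX2
    have hinX2 : ∑ p ∈ Ek.filter (fun p => p.2 ∈ Finset.univ.erase d), f p.1 p.2
        = ∑ p ∈ Ek, f p.1 p.2 - fk := by
      rw [← hthr, ← Finset.sum_filter_add_sum_filter_not Ek (fun p => p.2 = d)
        (fun p => f p.1 p.2)]
      have : Ek.filter (fun p => p.2 ∈ Finset.univ.erase d)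
          = Ek.filter (fun p => ¬ p.2 = d) := by
        ext p; simp [Finset.mem_erase]
      rw [this]; ring
    have houtX2 : Ek.filter (fun p => p.1 ∈ Finset.univ.erase d) = Ek := by
      refine Finset.filter_true_of_mem fun p hp => ?_
      refine Finset.mem_erase.mpr ⟨fun h => ?_, Finset.mem_univ _⟩
      have : (p.1, p.2) ∈ Ek := by simpa using hp
      rw [h] at this
      exact hd_out p.2 this
    rw [hinX2, houtX2] at hX2
    rw [hX2]; ring
  have hcapfk : cap = fk := by
    have h1 : ∑ n ∈ A, q n = lam - cap := by rw [hAeq, if_pos hsA]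
    rw [hSA, hglob] at h1
    linarith
  exact ⟨(hmemA s).mp hsA, hqd, hcapfk⟩
end

section
/- Under the hypotheses of the previous min-cut lemma, (A_k, A_k^c) is the unique smallest min-cut of D_k: for any other min-cut (B, B^c) with B ≠ A_k, one has A_k ⊊ B. -/
open Finset

/-- Uniqueness of the smallest min-cut.  Under the hypotheses of the min-cut lemma
(flow allocation `f` inducing the lexicographically minimal overload vector `q`, with
`A_k = {n | q n > 0}` nonempty, `s ∈ A_k`, `d ∉ A_k`, `f_{ij} = c_{ij}` on links from
`A_k` to `A_k^c`, `f_{ij} = 0` on links from `A_k^c` to `A_k`, and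
`cap_k(A_k, A_k^c) = fk` where `fk` is at most the capacity of every cut),
`(A_k, A_k^c)` is the unique smallest min-cut of `D_k`: for any other min-cut
`(B, B^c)` with `B ≠ A_k`, one has `A_k ⊊ B`. -/
theorem smallest_min_cut_unique
    {V : Type*} [Fintype V] [DecidableEq V]
    (Ek : Finset (V × V)) (s d : V) (hsd : s ≠ d)
    (c f : V → V → ℝ) (q : V → ℝ) (lam fk : ℝ)
    (hbounds : ∀ p ∈ Ek, 0 ≤ f p.1 p.2 ∧ f p.1 p.2 ≤ c p.1 p.2)
    (hq0 : ∀ n, 0 ≤ q n) (hqd : q d = 0) (hqs : 0 < q s)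
    (hcons : ∀ n, n ≠ d →
      q n = (if n = s then lam else 0)
        + ∑ p ∈ Ek.filter (fun p => p.2 = n), f p.1 p.2
        - ∑ p ∈ Ek.filter (fun p => p.1 = n), f p.1 p.2)
    (hfull : ∀ p ∈ Ek, 0 < q p.1 → ¬ 0 < q p.2 → f p.1 p.2 = c p.1 p.2)
    (hzero : ∀ p ∈ Ek, ¬ 0 < q p.1 → 0 < q p.2 → f p.1 p.2 = 0)
    (hcapA : ∑ p ∈ Ek.filter (fun p => 0 < q p.1 ∧ ¬ 0 < q p.2), c p.1 p.2 = fk)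
    (hmin : ∀ X : Finset V, s ∈ X → d ∉ X →
      fk ≤ ∑ p ∈ Ek.filter (fun p => p.1 ∈ X ∧ p.2 ∉ X), c p.1 p.2) :
    ∀ B : Finset V, s ∈ B → d ∉ B →
      (∑ p ∈ Ek.filter (fun p => p.1 ∈ B ∧ p.2 ∉ B), c p.1 p.2) = fk →
      B ≠ univ.filter (fun n => 0 < q n) →
      univ.filter (fun n => 0 < q n) ⊂ B := by
  intro B hsB hdB hcapB hne
  set A : Finset V := univ.filter (fun n => 0 < q n) with hA
  have hmemA : ∀ n, n ∈ A ↔ 0 < q n := by intro n; simp [hA]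
  have hsA : s ∈ A := (hmemA s).mpr hqs
  have hdA : d ∉ A := by
    rw [hmemA]; rw [hqd]; exact lt_irrefl 0
  -- net flow across any cut
  have net : ∀ X : Finset V, s ∈ X → d ∉ X →
      ∑ p ∈ Ek.filter (fun p => p.1 ∈ X ∧ p.2 ∉ X), f p.1 p.2
      - ∑ p ∈ Ek.filter (fun p => p.1 ∉ X ∧ p.2 ∈ X), f p.1 p.2
      = lam - ∑ n ∈ X, q n := by
    intro X hs hd
    have h1 : ∑ n ∈ X, q n
        = lam + ∑ p ∈ Ek.filter (fun p => p.2 ∈ X), f p.1 p.2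
          - ∑ p ∈ Ek.filter (fun p => p.1 ∈ X), f p.1 p.2 := by
      rw [Finset.sum_congr rfl (fun n hn => hcons n (fun h => hd (h ▸ hn)))]
      rw [Finset.sum_sub_distrib, Finset.sum_add_distrib]
      rw [Finset.sum_ite_eq' X s (fun _ => lam)]
      rw [Finset.sum_fiberwise_eq_sum_filter Ek X (fun p => p.2) (fun p => f p.1 p.2)]
      rw [Finset.sum_fiberwise_eq_sum_filter Ek X (fun p => p.1) (fun p => f p.1 p.2)]
      simp [hs]
    have h2 : ∑ p ∈ Ek.filter (fun p => p.2 ∈ X), f p.1 p.2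
        = ∑ p ∈ Ek.filter (fun p => p.1 ∈ X ∧ p.2 ∈ X), f p.1 p.2
          + ∑ p ∈ Ek.filter (fun p => p.1 ∉ X ∧ p.2 ∈ X), f p.1 p.2 := by
      rw [← Finset.sum_filter_add_sum_filter_not (Ek.filter (fun p => p.2 ∈ X))
        (fun p => p.1 ∈ X)]
      rw [Finset.filter_filter, Finset.filter_filter]
      congr 1 <;> apply Finset.sum_congr _ (fun _ _ => rfl) <;>
        · apply Finset.filter_congr; intro p _; constructor <;> exact fun h => ⟨h.2, h.1⟩
    have h3 : ∑ p ∈ Ek.filter (fun p => p.1 ∈ X), f p.1 p.2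
        = ∑ p ∈ Ek.filter (fun p => p.1 ∈ X ∧ p.2 ∈ X), f p.1 p.2
          + ∑ p ∈ Ek.filter (fun p => p.1 ∈ X ∧ p.2 ∉ X), f p.1 p.2 := by
      rw [← Finset.sum_filter_add_sum_filter_not (Ek.filter (fun p => p.1 ∈ X))
        (fun p => p.2 ∈ X)]
      rw [Finset.filter_filter, Finset.filter_filter]
    rw [h2, h3] at h1
    linarith
  have netA := net A hsA hdA
  have netB := net B hsB hdB
  -- on edges out of A, f = c, so the outflow of A is fk
  have hfA : ∑ p ∈ Ek.filter (fun p => p.1 ∈ A ∧ p.2 ∉ A), f p.1 p.2 = fk := by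
    rw [← hcapA]
    apply Finset.sum_congr
    · apply Finset.filter_congr; intro p _; simp [hmemA]
    · intro p hp
      rw [Finset.mem_filter] at hp
      exact hfull p hp.1 hp.2.1 hp.2.2
  -- inflow of A is zero
  have hzA : ∑ p ∈ Ek.filter (fun p => p.1 ∉ A ∧ p.2 ∈ A), f p.1 p.2 = 0 := by
    apply Finset.sum_eq_zero
    intro p hp
    rw [Finset.mem_filter, hmemA, hmemA] at hp
    exact hzero p hp.1 hp.2.1 hp.2.2
  have hAval : fk = lam - ∑ n ∈ A, q n := by rw [← netA, hfA, hzA]; ring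
  -- outflow of B at most fk, inflow nonneg
  have houtB : ∑ p ∈ Ek.filter (fun p => p.1 ∈ B ∧ p.2 ∉ B), f p.1 p.2 ≤ fk := by
    rw [← hcapB]
    exact Finset.sum_le_sum (fun p hp => (hbounds p (Finset.mem_filter.mp hp).1).2)
  have hinB : 0 ≤ ∑ p ∈ Ek.filter (fun p => p.1 ∉ B ∧ p.2 ∈ B), f p.1 p.2 :=
    Finset.sum_nonneg (fun p hp => (hbounds p (Finset.mem_filter.mp hp).1).1)
  have hkey : ∑ n ∈ A, q n ≤ ∑ n ∈ B, q n := by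
    have : lam - ∑ n ∈ B, q n ≤ fk := by
      rw [← netB]; linarith
    linarith [hAval]
  -- conclude A ⊆ B
  have hAunion : ∑ n ∈ A ∪ B, q n = ∑ n ∈ A, q n := by
    symm
    apply Finset.sum_subset Finset.subset_union_left
    intro n _ hn
    rw [hmemA] at hn
    exact le_antisymm (not_lt.mp hn) (hq0 n)
  have hsub : A ⊆ B := by
    intro a ha
    by_contra hab
    have h1 : B ⊆ (A ∪ B).erase a := by
      intro b hb
      exact Finset.mem_erase.mpr ⟨fun h => hab (h ▸ hb), Finset.mem_union_right _ hb⟩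
    have h2 : ∑ n ∈ B, q n ≤ ∑ n ∈ (A ∪ B).erase a, q n :=
      Finset.sum_le_sum_of_subset_of_nonneg h1 (fun n _ _ => hq0 n)
    have h3 : ∑ n ∈ (A ∪ B).erase a, q n = ∑ n ∈ A ∪ B, q n - q a := by
      rw [Finset.sum_erase_eq_sub (Finset.mem_union_left _ ha)]
    have hqa : 0 < q a := (hmemA a).mp ha
    rw [h3, hAunion] at h2
    linarith [hkey]
  exact Finset.ssubset_iff_subset_ne.mpr ⟨hsub, fun h => hne h.symm⟩
end

section
/- Consider node states updated by x_n(k) = x_n(k−1) − 2^k·Δ if n is overloaded at iteration k, and x_n(k) = x_n(k−1) otherwise, with initial states x_n(0) = n and Δ > max_{i,j} (x_i(0) − x_j(0)). Then after each iteration: (a) the states remain distinct; (b) every overloaded node has strictly smaller state than every non-overloaded node; and (c) orienting every edge from the endpoint with the smaller state to the endpoint with the larger state reproduces exactly the orientation produced by the link-reversal algorithm (edges within the overloaded set and within the non-overloaded set keep their directions; edges between the sets point from overloaded to non-overloaded). -/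
open Finset

/-- Node states updated by `x (k+1) n = x k n − 2^(k+1)·Δ` if `n` is overloaded at
iteration `k+1` (i.e. `n ∈ O (k+1)`), and `x (k+1) n = x k n` otherwise, with distinct
integer initial states `x 0 = ID` and `Δ > ID i − ID j` for all `i, j`.  Then after each
iteration: (a) the states remain distinct; (b) every overloaded node has strictly
smaller state than every non-overloaded node; and (c) orienting every edge from the
endpoint with smaller state to the endpoint with larger state reproduces the
link-reversal orientation: for endpoints on the same side of the overloaded set the
state comparison (hence the edge direction) is unchanged from the previous iteration,
while an overloaded endpoint gets smaller state than a non-overloaded one (so such edges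
point from the overloaded to the non-overloaded side). -/
theorem link_reversal_states
    {V : Type*} [Fintype V] [DecidableEq V]
    (ID : V → ℤ) (hID : Function.Injective ID)
    (Δ : ℤ) (hΔ : ∀ i j : V, ID i - ID j < Δ)
    (O : ℕ → Finset V)
    (x : ℕ → V → ℤ)
    (hx0 : x 0 = ID)
    (hxs : ∀ k n, x (k + 1) n = if n ∈ O (k + 1) then x k n - 2 ^ (k + 1) * Δ else x k n) :
    ∀ k : ℕ,
      Function.Injective (x (k + 1)) ∧
      (∀ a ∈ O (k + 1), ∀ b ∉ O (k + 1), x (k + 1) a < x (k + 1) b) ∧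
      (∀ a b : V, (a ∈ O (k + 1) ↔ b ∈ O (k + 1)) →
        (x (k + 1) a < x (k + 1) b ↔ x k a < x k b)) := by
  have key : ∀ k : ℕ, Function.Injective (x k) ∧
      ∀ a b : V, x k a - x k b < 2 ^ (k + 1) * Δ := by
    intro k
    induction k with
    | zero =>
      refine ⟨by rw [hx0]; exact hID, ?_⟩
      intro a b
      have hpos : 0 < Δ := by have := hΔ a a; simpa using this
      have h := hΔ a b
      rw [hx0]
      have : (2 : ℤ) ^ (0 + 1) * Δ = 2 * Δ := by ring
      rw [this]; linarith
    | succ k ih =>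
      obtain ⟨hinj, hbd⟩ := ih
      have hp2 : (0 : ℤ) < 2 ^ (k + 1) := by positivity
      refine ⟨?_, ?_⟩
      · intro a b hab
        have hpos : 0 < Δ := by have := hΔ a a; simpa using this
        rw [hxs, hxs] at hab
        by_cases ha : a ∈ O (k + 1) <;> by_cases hb : b ∈ O (k + 1) <;>
          simp [ha, hb] at hab
        · exact hinj (by linarith)
        · exfalso; have h1 := hbd a b; nlinarith
        · exfalso; have h1 := hbd b a; nlinarith
        · exact hinj hab
      · intro a b
        have hpos : 0 < Δ := by have := hΔ a a; simpa using this
        have h1 := hbd a b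
        have h2 : (2 : ℤ) ^ (k + 1 + 1) = 2 * 2 ^ (k + 1) := by ring
        rw [hxs, hxs, h2]
        by_cases ha : a ∈ O (k + 1) <;> by_cases hb : b ∈ O (k + 1) <;>
          simp [ha, hb] <;> nlinarith
  intro k
  obtain ⟨hinjk, hbdk⟩ := key k
  obtain ⟨hinj, _⟩ := key (k + 1)
  have hp2 : (0 : ℤ) < 2 ^ (k + 1) := by positivity
  refine ⟨hinj, ?_, ?_⟩
  · intro a ha b hb
    rw [hxs, hxs]
    simp [ha, hb]
    have := hbdk a b
    linarith
  · intro a b hiff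
    rw [hxs, hxs]
    by_cases ha : a ∈ O (k + 1)
    · have hb := hiff.mp ha
      simp only [if_pos ha, if_pos hb]
      constructor <;> intro h <;> linarith
    · have hb : b ∉ O (k + 1) := fun h => ha (hiff.mpr h)
      simp only [if_neg ha, if_neg hb]
end
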